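/- arXiv:1606.02409 — 5 statements merged into one kernel-verified Lean document; each statement's English description precedes it below -/
import Mathlib

section
/- Consider two buyers with i.i.d. uniform [0,1] values, i.e., true quantile functions v₁(q) = v₂(q) = 1 − q. If buyer 2's fake virtual value is r₂(q) = (1−q)/2 (corresponding to fake distribution v̂₂(q) = 1/2 − q/4), so that the winning probability of buyer 1 with virtual bid r is x(r) = min(2r, 1) for r ∈ [0, 1/2], then the pointwise maximizer of x(r)(v₁(q) − r) over r ∈ [0, 1/2] is r = (1−q)/2. Hence v̂(q) = 1/2 − q/4 for both buyers is a symmetric equilibrium of the induced game. -/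
/-- with two i.i.d. uniform `[0,1]` buyers and opponent virtual value
`(1-q)/2`, the winning probability of virtual bid `r` is `min (2r) 1`, and the
pointwise best response over `r ∈ [0,1/2]` is `r = (1-q)/2`. Hence
`vhat q = 1/2 - q/4` is a symmetric equilibrium best response. -/
theorem myerson_uniform_equilibrium :
    ∀ q ∈ Set.Icc (0:ℝ) 1, ∀ r ∈ Set.Icc (0:ℝ) (1/2),
      min (2*r) 1 * ((1 - q) - r)
        ≤ min (2*((1 - q)/2)) 1 * ((1 - q) - (1 - q)/2) := by
  rintro q ⟨hq0, hq1⟩ r ⟨hr0, hr1⟩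
  have h1 : min (2*((1 - q)/2)) 1 = 1 - q := by
    rw [min_eq_left]; ring_nf; linarith
  rw [h1]
  rcases le_or_gt (1 - q - r) 0 with h | h
  · have : min (2*r) 1 ≥ 0 := le_min (by linarith) one_pos.le
    nlinarith [mul_nonpos_of_nonneg_of_nonpos this h]
  · have hm : min (2*r) 1 ≤ 2*r := min_le_left _ _
    have : min (2*r) 1 * ((1-q) - r) ≤ 2*r * ((1-q)-r) :=
      mul_le_mul_of_nonneg_right hm (by linarith)
    nlinarith [sq_nonneg (1 - q - 2*r)]
end

section
/- With two buyers and the symmetric equilibrium fake distribution v̂(q) = 1/2 − q/4 for uniform [0,1] true values, each buyer's utility is 1/6, the seller's expected revenue is 1/3, and the expected social welfare E[max(v₁, v₂)] = 2/3. -/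
set_option maxHeartbeats 1000000 in
lemma inner_max (q : ℝ) (hq : q ∈ Set.uIcc (0:ℝ) 1) :
    (∫ p in (0:ℝ)..1, max (1 - q) (1 - p)) = 1 - q + q^2/2 := by
  rw [Set.uIcc_of_le (by norm_num)] at hq
  obtain ⟨h0, h1⟩ := hq
  rw [← intervalIntegral.integral_add_adjacent_intervals (b := q)
    (Continuous.intervalIntegrable (by fun_prop) 0 q)
    (Continuous.intervalIntegrable (by fun_prop) q 1)]
  have e1 : (∫ p in (0:ℝ)..q, max (1 - q) (1 - p)) = ∫ p in (0:ℝ)..q, (1 - p) := by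
    apply intervalIntegral.integral_congr
    intro p hp
    rw [Set.uIcc_of_le h0] at hp
    exact max_eq_right (by linarith [hp.2])
  have e2 : (∫ p in q..1, max (1 - q) (1 - p)) = ∫ p in q..1, (1 - q) := by
    apply intervalIntegral.integral_congr
    intro p hp
    rw [Set.uIcc_of_le h1] at hp
    exact max_eq_left (by linarith [hp.1])
  rw [e1, e2]
  rw [intervalIntegral.integral_const]
  have : (∫ p in (0:ℝ)..q, (1 - p)) = q - q^2/2 := by
    rw [intervalIntegral.integral_sub intervalIntegrable_const
      (Continuous.intervalIntegrable (by fun_prop) 0 q),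
      intervalIntegral.integral_const, integral_id]
    simp [smul_eq_mul]
  rw [this]; simp [smul_eq_mul]; ring

/-- outcomes at the symmetric equilibrium `vhat q = 1/2 - q/4` for
two i.i.d. uniform `[0,1]` buyers: each buyer's utility is `1/6`, revenue is
`1/3`, and the expected social welfare is `2/3`. -/
theorem myerson_uniform_equilibrium_outcomes :
    (∫ q in (0:ℝ)..1, (1 - q) * ((1 - q) - (1 - q)/2)) = 1/6
    ∧ (2 * ∫ q in (0:ℝ)..1, (1 - q) * ((1 - q)/2)) = 1/3
    ∧ (∫ q in (0:ℝ)..1, ∫ p in (0:ℝ)..1, max (1 - q) (1 - p)) = 2/3 := by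
  refine ⟨?_, ?_, ?_⟩
  · have : ∀ q : ℝ, (1 - q) * ((1 - q) - (1 - q)/2) = 1/2 - q + q^2/2 := by intro q; ring
    simp_rw [this]
    rw [intervalIntegral.integral_add ((Continuous.intervalIntegrable (by fun_prop) 0 1))
      ((Continuous.intervalIntegrable (by fun_prop) 0 1)),
      intervalIntegral.integral_sub intervalIntegrable_const
      ((Continuous.intervalIntegrable (by fun_prop) 0 1)),
      intervalIntegral.integral_const, integral_id]
    simp [integral_pow]
    norm_num
  · have : ∀ q : ℝ, (1 - q) * ((1 - q)/2) = 1/2 - q + q^2/2 := by intro q; ring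
    simp_rw [this]
    rw [intervalIntegral.integral_add ((Continuous.intervalIntegrable (by fun_prop) 0 1))
      ((Continuous.intervalIntegrable (by fun_prop) 0 1)),
      intervalIntegral.integral_sub intervalIntegrable_const
      ((Continuous.intervalIntegrable (by fun_prop) 0 1)),
      intervalIntegral.integral_const, integral_id]
    simp [integral_pow]
    norm_num
  · rw [intervalIntegral.integral_congr inner_max]
    rw [intervalIntegral.integral_add (IntervalIntegrable.sub intervalIntegrable_const
      ((Continuous.intervalIntegrable (by fun_prop) 0 1)))
      ((Continuous.intervalIntegrable (by fun_prop) 0 1)),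
      intervalIntegral.integral_sub intervalIntegrable_const
      ((Continuous.intervalIntegrable (by fun_prop) 0 1)),
      intervalIntegral.integral_const, integral_id]
    simp [integral_pow]
    norm_num
end

section
/- Let v: [0,1] → ℝ₊ be weakly decreasing and differentiable (regular true distribution for 2 i.i.d. buyers). Suppose q₀ ∈ (0,1) satisfies (1 − q₀)·q₀·v(q₀) = ∫_{q₀}^1 q·v(q) dq. Then 2∫₀^{q₀}(1−q)·d(q·v(q)) = 2∫₀¹ q·v(q) dq; that is, the SPAMR equilibrium revenue equals the second-price auction revenue 2∫₀¹ q·v(q) dq. -/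
open MeasureTheory intervalIntegral Set Filter Topology

private lemma deriv_nonpos_of_antitoneOn {v : ℝ → ℝ}
    (hv_anti : AntitoneOn v (Set.Icc (0:ℝ) 1)) (hv_diff : Differentiable ℝ v)
    {x : ℝ} (hx : x ∈ Set.Ioo (0:ℝ) 1) : deriv v x ≤ 0 := by
  have hd : Tendsto (slope v x) (𝓝[≠] x) (𝓝 (deriv v x)) :=
    hasDerivAt_iff_tendsto_slope.1 (hv_diff x).hasDerivAt
  have hd' : Tendsto (slope v x) (𝓝[>] x) (𝓝 (deriv v x)) :=
    hd.mono_left (nhdsWithin_mono _ (fun y hy => ne_of_gt hy))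
  refine le_of_tendsto hd' ?_
  filter_upwards [Ioo_mem_nhdsGT_of_mem ⟨le_refl x, hx.2⟩] with y hy
  have hvy : v y ≤ v x :=
    hv_anti ⟨hx.1.le, hx.2.le⟩ ⟨(hx.1.trans hy.1).le, hy.2.le⟩ hy.1.le
  have : slope v x y = (v y - v x) / (y - x) := by
    simp [slope, div_eq_inv_mul]
  rw [this]
  exact div_nonpos_iff.2 (Or.inr ⟨by linarith, by linarith [hy.1]⟩)

/-- for two i.i.d. buyers with regular quantile function `v`, the
SPAMR symmetric-equilibrium revenue `2∫₀^{q₀}(1-q) d(q v(q))` equals the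
second-price auction revenue `2∫₀¹ q v(q) dq`, given the incident-quantile
first-order condition. -/
theorem spamr_revenue_eq_spa (v : ℝ → ℝ)
    (hv_anti : AntitoneOn v (Set.Icc (0:ℝ) 1))
    (hv_diff : Differentiable ℝ v)
    (hv_nonneg : ∀ q ∈ Set.Icc (0:ℝ) 1, 0 ≤ v q)
    (q₀ : ℝ) (hq₀ : q₀ ∈ Set.Ioo (0:ℝ) 1)
    (hfoc : (1 - q₀) * q₀ * v q₀ = ∫ q in q₀..1, q * v q) :
    2 * (∫ q in (0:ℝ)..q₀, (1 - q) * (v q + q * deriv v q))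
      = 2 * ∫ q in (0:ℝ)..1, q * v q := by
  have hvc : Continuous v := hv_diff.continuous
  have hq0 : (0:ℝ) < q₀ := hq₀.1
  have hq1 : q₀ < 1 := hq₀.2
  -- integrability of deriv v on (0,1)
  have hder_int : IntegrableOn (fun x => deriv v x) (Set.Ioc (0:ℝ) 1) := by
    have h := integrableOn_deriv_of_nonneg (g := fun x => -v x)
      (g' := fun x => -(deriv v x)) (a := 0) (b := 1)
      (hvc.neg.continuousOn)
      (fun x _ => ((hv_diff x).hasDerivAt).neg)
      (fun x hx => neg_nonneg.2 (deriv_nonpos_of_antitoneOn hv_anti hv_diff hx))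
    have h2 := h.neg
    simp only [Pi.neg_def, neg_neg] at h2
    exact h2
  have hder_ii : IntervalIntegrable (fun x => deriv v x) volume 0 q₀ := by
    rw [intervalIntegrable_iff_integrableOn_Ioc_of_le hq0.le]
    exact hder_int.mono_set (fun x hx => ⟨hx.1, hx.2.trans hq1.le⟩)
  -- integrability of the integrand
  have hint : IntervalIntegrable (fun q => (1 - q) * (v q + q * deriv v q)) volume 0 q₀ := by
    have h1 : IntervalIntegrable (fun q => (1 - q) * v q) volume 0 q₀ :=
      (Continuous.intervalIntegrable (by continuity) 0 q₀)
    have h2 : IntervalIntegrable (fun q => ((1 - q) * q) * deriv v q) volume 0 q₀ :=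
      hder_ii.continuousOn_mul (by fun_prop)
    have := h1.add h2
    convert this using 1
    ext q; ring
  -- the antiderivative
  set G : ℝ → ℝ := fun q => ∫ t in (0:ℝ)..q, t * v t with hG
  set F : ℝ → ℝ := fun q => (1 - q) * q * v q + G q with hF
  have hqv_cont : Continuous (fun t : ℝ => t * v t) := by continuity
  have hFderiv : ∀ x ∈ Set.uIcc (0:ℝ) q₀,
      HasDerivAt F ((1 - x) * (v x + x * deriv v x)) x := by
    intro x _
    have hG' : HasDerivAt G (x * v x) x :=
      intervalIntegral.integral_hasDerivAt_right (hqv_cont.intervalIntegrable 0 x)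
        (hqv_cont.stronglyMeasurableAtFilter _ _) hqv_cont.continuousAt
    have hvx : HasDerivAt v (deriv v x) x := (hv_diff x).hasDerivAt
    have h1 : HasDerivAt (fun q : ℝ => (1 - q) * q * v q)
        ((-1) * (x * v x) + (1 - x) * (1 * v x + x * deriv v x)) x := by
      have hu : HasDerivAt (fun q : ℝ => 1 - q) (-1 : ℝ) x := by
        simpa using ((hasDerivAt_id x).const_sub 1)
      have hw : HasDerivAt (fun q : ℝ => q * v q) (1 * v x + x * deriv v x) x :=
        (hasDerivAt_id x).mul hvx
      simpa [mul_assoc] using hu.fun_mul hw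
    have := h1.fun_add hG'
    exact this.congr_deriv (by ring)
  have key : (∫ q in (0:ℝ)..q₀, (1 - q) * (v q + q * deriv v q)) = F q₀ - F 0 :=
    intervalIntegral.integral_eq_sub_of_hasDerivAt hFderiv hint
  have hF0 : F 0 = 0 := by simp [hF, hG]
  have hsplit : (∫ q in (0:ℝ)..q₀, q * v q) + (∫ q in q₀..1, q * v q)
      = ∫ q in (0:ℝ)..1, q * v q :=
    intervalIntegral.integral_add_adjacent_intervals
      (hqv_cont.intervalIntegrable 0 q₀) (hqv_cont.intervalIntegrable q₀ 1)
  rw [key, hF0]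
  simp only [hF, hG]
  rw [hfoc]
  linarith [hsplit]
end

section
/- Let v̂: [0,1] → ℝ₊ be differentiable and weakly decreasing. Then ∫₀¹ (q + 2q²)·v̂(q) dq ≥ v̂(1). Equivalently, defining REV = ∫₀¹ 2q(1−q)v̂(q) dq and REV₂ = ∫₀¹ 3q·v̂(q) dq − v̂(1), one has REV₂ ≥ REV. -/
/-- key revenue inequality for the two-buyer single-sample
mechanism: `∫₀¹ (q + 2q²) vhat(q) dq ≥ vhat 1`, i.e. `REV₂ ≥ REV`. -/
theorem single_sample_two_buyers (vhat : ℝ → ℝ)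
    (hdiff : Differentiable ℝ vhat)
    (hanti : AntitoneOn vhat (Set.Icc (0:ℝ) 1))
    (hnonneg : ∀ q ∈ Set.Icc (0:ℝ) 1, 0 ≤ vhat q) :
    (∫ q in (0:ℝ)..1, (q + 2*q^2) * vhat q) ≥ vhat 1
    ∧ (∫ q in (0:ℝ)..1, 3*q*vhat q) - vhat 1 ≥ ∫ q in (0:ℝ)..1, 2*q*(1-q)*vhat q := by
  have hcont : Continuous vhat := hdiff.continuous
  have h1 : (1:ℝ) ∈ Set.Icc (0:ℝ) 1 := by constructor <;> norm_num
  have hv1 : 0 ≤ vhat 1 := hnonneg 1 h1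
  have hint1 : IntervalIntegrable (fun q => (q + 2*q^2) * vhat q) MeasureTheory.volume 0 1 :=
    (Continuous.mul (by continuity) hcont).intervalIntegrable 0 1
  have hint2 : IntervalIntegrable (fun q => (q + 2*q^2) * vhat 1) MeasureTheory.volume 0 1 :=
    (Continuous.mul (by continuity) continuous_const).intervalIntegrable 0 1
  have hmono : (∫ q in (0:ℝ)..1, (q + 2*q^2) * vhat 1)
      ≤ ∫ q in (0:ℝ)..1, (q + 2*q^2) * vhat q := by
    apply intervalIntegral.integral_mono_on (by norm_num) hint2 hint1
    intro x hx
    have hx0 : 0 ≤ x := hx.1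
    have hq : (0:ℝ) ≤ x + 2*x^2 := by positivity
    have : vhat 1 ≤ vhat x := hanti (Set.mem_Icc.mpr ⟨hx0, hx.2⟩) h1 hx.2
    exact mul_le_mul_of_nonneg_left this hq
  have hcalc : (∫ q in (0:ℝ)..1, (q + 2*q^2) * vhat 1) = 7/6 * vhat 1 := by
    rw [intervalIntegral.integral_mul_const]
    have : (∫ q in (0:ℝ)..1, (q + 2*q^2)) = 7/6 := by
      rw [intervalIntegral.integral_add (by apply Continuous.intervalIntegrable; continuity)
        (by apply Continuous.intervalIntegrable; continuity)]
      simp [intervalIntegral.integral_const_mul, integral_pow, integral_id]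
      norm_num
    rw [this]
  have hfirst : (∫ q in (0:ℝ)..1, (q + 2*q^2) * vhat q) ≥ vhat 1 := by
    calc vhat 1 ≤ 7/6 * vhat 1 := by linarith
    _ = ∫ q in (0:ℝ)..1, (q + 2*q^2) * vhat 1 := hcalc.symm
    _ ≤ _ := hmono
  refine ⟨hfirst, ?_⟩
  have hintA : IntervalIntegrable (fun q => 2*q*(1-q) * vhat q) MeasureTheory.volume 0 1 :=
    (Continuous.mul (by continuity) hcont).intervalIntegrable 0 1
  have hintB : IntervalIntegrable (fun q => 3*q * vhat q) MeasureTheory.volume 0 1 :=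
    (Continuous.mul (by continuity) hcont).intervalIntegrable 0 1
  have hsplit : (∫ q in (0:ℝ)..1, 3*q*vhat q) - (∫ q in (0:ℝ)..1, 2*q*(1-q)*vhat q)
      = ∫ q in (0:ℝ)..1, (q + 2*q^2) * vhat q := by
    rw [← intervalIntegral.integral_sub hintB hintA]
    apply intervalIntegral.integral_congr
    intro x _
    ring
  linarith
end

section
/- Suppose R: [0,1] × ℝ × ℝ → ℝ, written R(q, v, w), is continuously differentiable, and for every twice-differentiable weakly decreasing v̂: [0,1] → ℝ₊, the map q ↦ R(q, v̂(q), v̂'(q)) is weakly decreasing. Then ∂R/∂w ≡ 0, ∂R/∂q ≤ 0, and ∂R/∂v ≥ 0 at every point attainable by such v̂. -/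
/-!
Along an admissible profile `v̂` the chain rule gives
`d/dq R(q, v̂, v̂') = R_q + v̂' R_v + v̂'' R_w ≤ 0`. The profiles
`x ↦ v exp ((c / β) (exp (β (x - q₀)) - 1))` with `c = w / v < 0` are positive, decreasing and
smooth, have value `v` and slope `w` at `q₀`, and second derivative `w² / v + w β` there, which
takes every value but one. Hence `R_w = 0` and `R_q + w R_v ≤ 0` wherever `v > 0 > w`, and by
continuity wherever `v ≥ 0 ≥ w`. So `R` does not depend on `w ≤ 0` there, nor do `R_q` and `R_v`,
and `R_q + w R_v ≤ 0` for all `w ≤ 0` gives `R_q ≤ 0` (at `w = 0`) and `R_v ≥ 0` (as `w → -∞`).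
-/

open Set Filter Topology Real

theorem nonneg_of_forall_neg_add_mul_nonpos {a b : ℝ} (h : ∀ t < 0, a + t * b ≤ 0) : 0 ≤ b := by
  by_contra! hb
  have ht : (|a| + 1) / b * b = |a| + 1 := div_mul_cancel₀ _ hb.ne
  have := h ((|a| + 1) / b) (div_neg_of_pos_of_neg (by positivity) hb)
  linarith [neg_le_abs a]

theorem eq_zero_of_forall_ne_zero_add_mul_nonpos {a b : ℝ} (h : ∀ t ≠ 0, a + t * b ≤ 0) :
    b = 0 := by
  have hb := nonneg_of_forall_neg_add_mul_nonpos fun t ht => h t ht.ne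
  have hnb := nonneg_of_forall_neg_add_mul_nonpos (b := -b) fun t ht => by
    simpa using h (-t) (neg_ne_zero.mpr ht.ne)
  linarith

theorem IsClosed.mem_of_forall_pos {X : Type*} [TopologicalSpace X] {S : Set X} (hS : IsClosed S)
    {φ : ℝ → X} (hφ : ContinuousAt φ 0) (h : ∀ t > 0, φ t ∈ S) : φ 0 ∈ S :=
  hS.mem_of_tendsto (b := 𝓝[>] 0) (hφ.tendsto.mono_left nhdsWithin_le_nhds)
    (eventually_nhdsWithin_of_forall h)

theorem HasDerivAt.nonpos_of_antitoneOn {f : ℝ → ℝ} {s : Set ℝ} {x d : ℝ}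
    (hd : HasDerivAt f d x) (hf : AntitoneOn f s) (hs : UniqueDiffWithinAt ℝ s x) : d ≤ 0 :=
  (hd.hasDerivWithinAt.derivWithin hs).symm ▸ hf.derivWithin_nonpos

theorem deriv_eq_of_eqOn {f g : ℝ → ℝ} {s : Set ℝ} {x : ℝ} (hfg : EqOn f g s) (hx : x ∈ s)
    (hs : UniqueDiffWithinAt ℝ s x) (hf : DifferentiableAt ℝ f x)
    (hg : DifferentiableAt ℝ g x) : deriv f x = deriv g x := by
  rw [← hf.derivWithin hs, ← hg.derivWithin hs]
  exact derivWithin_congr hfg (hfg hx)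

noncomputable section Partials

variable (R : ℝ → ℝ → ℝ → ℝ) (q v w : ℝ)

def partialQ : ℝ := deriv (fun s => R s v w) q

def partialV : ℝ := deriv (fun u => R q u w) v

def partialW : ℝ := deriv (fun x => R q v x) w

variable {R q v w}

theorem hasDerivAt_comp_curve_fderiv {a b c : ℝ → ℝ} {a' b' c' t : ℝ}
    (hR : DifferentiableAt ℝ (fun p : ℝ × ℝ × ℝ => R p.1 p.2.1 p.2.2) (a t, b t, c t))
    (ha : HasDerivAt a a' t) (hb : HasDerivAt b b' t) (hc : HasDerivAt c c' t) :
    HasDerivAt (fun s => R (a s) (b s) (c s))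
      (fderiv ℝ (fun p : ℝ × ℝ × ℝ => R p.1 p.2.1 p.2.2) (a t, b t, c t) (a', b', c')) t := by
  exact hR.hasFDerivAt.comp_hasDerivAt t (ha.prodMk (hb.prodMk hc))

theorem fderiv_uncurry_apply
    (hR : DifferentiableAt ℝ (fun p : ℝ × ℝ × ℝ => R p.1 p.2.1 p.2.2) (q, v, w)) (a b c : ℝ) :
    fderiv ℝ (fun p : ℝ × ℝ × ℝ => R p.1 p.2.1 p.2.2) (q, v, w) (a, b, c) =
      a * partialQ R q v w + b * partialV R q v w + c * partialW R q v w := by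
  have hQ := hasDerivAt_comp_curve_fderiv hR (hasDerivAt_id' q) (hasDerivAt_const q v)
    (hasDerivAt_const q w)
  have hV := hasDerivAt_comp_curve_fderiv hR (hasDerivAt_const v q) (hasDerivAt_id' v)
    (hasDerivAt_const v w)
  have hW := hasDerivAt_comp_curve_fderiv hR (hasDerivAt_const w q) (hasDerivAt_const w v)
    (hasDerivAt_id' w)
  have habc : ((a, b, c) : ℝ × ℝ × ℝ) = a • (1, 0, 0) + b • (0, 1, 0) + c • (0, 0, 1) := by
    simp
  rw [partialQ, partialV, partialW, hQ.deriv, hV.deriv, hW.deriv, habc, map_add, map_add,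
    map_smul, map_smul, map_smul, smul_eq_mul, smul_eq_mul, smul_eq_mul]

theorem hasDerivAt_comp_curve {a b c : ℝ → ℝ} {a' b' c' t : ℝ}
    (hR : DifferentiableAt ℝ (fun p : ℝ × ℝ × ℝ => R p.1 p.2.1 p.2.2) (a t, b t, c t))
    (ha : HasDerivAt a a' t) (hb : HasDerivAt b b' t) (hc : HasDerivAt c c' t) :
    HasDerivAt (fun s => R (a s) (b s) (c s))
      (a' * partialQ R (a t) (b t) (c t) + b' * partialV R (a t) (b t) (c t) +
        c' * partialW R (a t) (b t) (c t)) t :=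
  fderiv_uncurry_apply hR a' b' c' ▸ hasDerivAt_comp_curve_fderiv hR ha hb hc

theorem continuous_partialQ (hR : ContDiff ℝ 1 fun p : ℝ × ℝ × ℝ => R p.1 p.2.1 p.2.2) :
    Continuous fun p : ℝ × ℝ × ℝ => partialQ R p.1 p.2.1 p.2.2 :=
  ((hR.continuous_fderiv one_ne_zero).clm_apply
    (continuous_const (y := ((1, 0, 0) : ℝ × ℝ × ℝ)))).congr fun p => by
    simp [fderiv_uncurry_apply (hR.differentiable one_ne_zero p)]

theorem continuous_partialV (hR : ContDiff ℝ 1 fun p : ℝ × ℝ × ℝ => R p.1 p.2.1 p.2.2) :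
    Continuous fun p : ℝ × ℝ × ℝ => partialV R p.1 p.2.1 p.2.2 :=
  ((hR.continuous_fderiv one_ne_zero).clm_apply
    (continuous_const (y := ((0, 1, 0) : ℝ × ℝ × ℝ)))).congr fun p => by
    simp [fderiv_uncurry_apply (hR.differentiable one_ne_zero p)]

theorem continuous_partialW (hR : ContDiff ℝ 1 fun p : ℝ × ℝ × ℝ => R p.1 p.2.1 p.2.2) :
    Continuous fun p : ℝ × ℝ × ℝ => partialW R p.1 p.2.1 p.2.2 :=
  ((hR.continuous_fderiv one_ne_zero).clm_apply
    (continuous_const (y := ((0, 0, 1) : ℝ × ℝ × ℝ)))).congr fun p => by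
    simp [fderiv_uncurry_apply (hR.differentiable one_ne_zero p)]

theorem hasDerivAt_partialQ
    (hR : DifferentiableAt ℝ (fun p : ℝ × ℝ × ℝ => R p.1 p.2.1 p.2.2) (q, v, w)) :
    HasDerivAt (fun s => R s v w) (partialQ R q v w) q := by
  simpa using hasDerivAt_comp_curve hR (hasDerivAt_id' q) (hasDerivAt_const q v)
    (hasDerivAt_const q w)

theorem hasDerivAt_partialV
    (hR : DifferentiableAt ℝ (fun p : ℝ × ℝ × ℝ => R p.1 p.2.1 p.2.2) (q, v, w)) :
    HasDerivAt (fun u => R q u w) (partialV R q v w) v := by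
  simpa using hasDerivAt_comp_curve hR (hasDerivAt_const v q) (hasDerivAt_id' v)
    (hasDerivAt_const v w)

theorem hasDerivAt_partialW
    (hR : DifferentiableAt ℝ (fun p : ℝ × ℝ × ℝ => R p.1 p.2.1 p.2.2) (q, v, w)) :
    HasDerivAt (fun x => R q v x) (partialW R q v w) w := by
  simpa using hasDerivAt_comp_curve hR (hasDerivAt_const w q) (hasDerivAt_const w v)
    (hasDerivAt_id' w)

end Partials

noncomputable section TestProfile

variable (v c β q₀ : ℝ)

def testProfile (x : ℝ) : ℝ := v * exp (c / β * (exp (β * (x - q₀)) - 1))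

variable {v c β q₀}

theorem contDiff_testProfile : ContDiff ℝ 2 (testProfile v c β q₀) := by
  unfold testProfile; fun_prop

theorem testProfile_self : testProfile v c β q₀ q₀ = v := by
  simp [testProfile]

theorem testProfile_nonneg (hv : 0 ≤ v) (x : ℝ) : 0 ≤ testProfile v c β q₀ x := by
  unfold testProfile; positivity

theorem hasDerivAt_testProfile (hβ : β ≠ 0) (x : ℝ) :
    HasDerivAt (testProfile v c β q₀) (c * exp (β * (x - q₀)) * testProfile v c β q₀ x) x := by
  have hlin : HasDerivAt (fun x => β * (x - q₀)) β x := by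
    simpa using ((hasDerivAt_id x).sub_const q₀).const_mul β
  refine (((hlin.exp.sub_const 1).const_mul (c / β)).exp.const_mul v).congr_deriv ?_
  simp only [testProfile]
  field_simp

theorem deriv_testProfile (hβ : β ≠ 0) :
    deriv (testProfile v c β q₀) = fun x => c * exp (β * (x - q₀)) * testProfile v c β q₀ x :=
  funext fun x => (hasDerivAt_testProfile hβ x).deriv

theorem antitone_testProfile (hv : 0 ≤ v) (hc : c ≤ 0) (hβ : β ≠ 0) :
    Antitone (testProfile v c β q₀) :=
  antitone_of_deriv_nonpos (contDiff_testProfile.differentiable two_ne_zero) fun x => by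
    rw [deriv_testProfile hβ]
    exact mul_nonpos_of_nonpos_of_nonneg (mul_nonpos_of_nonpos_of_nonneg hc (exp_pos _).le)
      (testProfile_nonneg hv x)

theorem hasDerivAt_testProfile_self (hβ : β ≠ 0) :
    HasDerivAt (testProfile v c β q₀) (c * v) q₀ := by
  simpa [testProfile_self] using hasDerivAt_testProfile (q₀ := q₀) hβ q₀

theorem hasDerivAt_deriv_testProfile_self (hβ : β ≠ 0) :
    HasDerivAt (deriv (testProfile v c β q₀)) (c * (β + c) * v) q₀ := by
  have hlin : HasDerivAt (fun x => β * (x - q₀)) β q₀ := by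
    simpa using ((hasDerivAt_id q₀).sub_const q₀).const_mul β
  rw [deriv_testProfile hβ]
  refine ((hlin.exp.const_mul c).mul (hasDerivAt_testProfile_self (v := v) hβ)).congr_deriv ?_
  simp only [sub_self, mul_zero, exp_zero, testProfile_self]
  ring

end TestProfile

def AntitoneAlongProfiles (R : ℝ → ℝ → ℝ → ℝ) : Prop :=
  ∀ vhat : ℝ → ℝ, ContDiff ℝ 2 vhat → Antitone vhat → (∀ q, 0 ≤ vhat q) →
    AntitoneOn (fun q => R q (vhat q) (deriv vhat q)) (Icc (0 : ℝ) 1)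

namespace AntitoneAlongProfiles

variable {R : ℝ → ℝ → ℝ → ℝ} {q v w : ℝ}

theorem jet_nonpos (hmono : AntitoneAlongProfiles R)
    (hR : DifferentiableAt ℝ (fun p : ℝ × ℝ × ℝ => R p.1 p.2.1 p.2.2) (q, v, w))
    (hq : q ∈ Icc (0 : ℝ) 1) {g : ℝ → ℝ} (hg : ContDiff ℝ 2 g) (hanti : Antitone g)
    (hnonneg : ∀ x, 0 ≤ g x) {z : ℝ} (hgq : g q = v) (hg₁ : HasDerivAt g w q)
    (hg₂ : HasDerivAt (deriv g) z q) :
    partialQ R q v w + w * partialV R q v w + z * partialW R q v w ≤ 0 := by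
  rw [← hgq, ← hg₁.deriv] at hR ⊢
  simpa using (hasDerivAt_comp_curve hR (hasDerivAt_id' q) hg₁.differentiableAt.hasDerivAt
    hg₂).nonpos_of_antitoneOn (hmono g hg hanti hnonneg) (uniqueDiffOn_Icc zero_lt_one q hq)

theorem partialQ_add_nonpos_of_pos_of_neg (hmono : AntitoneAlongProfiles R)
    (hR : DifferentiableAt ℝ (fun p : ℝ × ℝ × ℝ => R p.1 p.2.1 p.2.2) (q, v, w))
    (hq : q ∈ Icc (0 : ℝ) 1) (hv : 0 < v) (hw : w < 0) {t : ℝ} (ht : t ≠ 0) :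
    partialQ R q v w + w * partialV R q v w + (w * w / v + t) * partialW R q v w ≤ 0 := by
  have hβ : t / w ≠ 0 := div_ne_zero ht hw.ne
  have hslope : w / v * v = w := div_mul_cancel₀ w hv.ne'
  have hcurv : w / v * (t / w + w / v) * v = w * w / v + t := by
    field_simp [hw.ne, hv.ne']
    ring
  have hg₁ := hasDerivAt_testProfile_self (v := v) (c := w / v) (q₀ := q) hβ
  have hg₂ := hasDerivAt_deriv_testProfile_self (v := v) (c := w / v) (q₀ := q) hβ
  rw [hslope] at hg₁
  rw [hcurv] at hg₂
  exact hmono.jet_nonpos hR hq contDiff_testProfile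
    (antitone_testProfile hv.le (div_nonpos_of_nonpos_of_nonneg hw.le hv.le) hβ)
    (testProfile_nonneg hv.le) testProfile_self hg₁ hg₂

theorem partialW_eq_zero_of_pos_of_neg (hmono : AntitoneAlongProfiles R)
    (hR : DifferentiableAt ℝ (fun p : ℝ × ℝ × ℝ => R p.1 p.2.1 p.2.2) (q, v, w))
    (hq : q ∈ Icc (0 : ℝ) 1) (hv : 0 < v) (hw : w < 0) : partialW R q v w = 0 :=
  eq_zero_of_forall_ne_zero_add_mul_nonpos (a := partialQ R q v w + w * partialV R q v w +
    w * w / v * partialW R q v w) fun t ht => by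
    linear_combination hmono.partialQ_add_nonpos_of_pos_of_neg hR hq hv hw ht

theorem partialQ_add_mul_partialV_nonpos_of_pos_of_neg (hmono : AntitoneAlongProfiles R)
    (hR : DifferentiableAt ℝ (fun p : ℝ × ℝ × ℝ => R p.1 p.2.1 p.2.2) (q, v, w))
    (hq : q ∈ Icc (0 : ℝ) 1) (hv : 0 < v) (hw : w < 0) :
    partialQ R q v w + w * partialV R q v w ≤ 0 := by
  simpa [hmono.partialW_eq_zero_of_pos_of_neg hR hq hv hw] using
    hmono.partialQ_add_nonpos_of_pos_of_neg hR hq hv hw one_ne_zero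

theorem partialW_eq_zero (hmono : AntitoneAlongProfiles R)
    (hR : ContDiff ℝ 1 fun p : ℝ × ℝ × ℝ => R p.1 p.2.1 p.2.2)
    (hq : q ∈ Icc (0 : ℝ) 1) (hv : 0 ≤ v) (hw : w ≤ 0) : partialW R q v w = 0 := by
  have hcurve : Continuous fun t : ℝ => ((q, v + t, w - t) : ℝ × ℝ × ℝ) := by fun_prop
  simpa using isClosed_singleton.mem_of_forall_pos
    ((continuous_partialW hR).comp hcurve).continuousAt fun t ht =>
      hmono.partialW_eq_zero_of_pos_of_neg (hR.differentiable one_ne_zero _) hq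
        (by linarith) (by linarith)

theorem partialQ_add_mul_partialV_nonpos (hmono : AntitoneAlongProfiles R)
    (hR : ContDiff ℝ 1 fun p : ℝ × ℝ × ℝ => R p.1 p.2.1 p.2.2)
    (hq : q ∈ Icc (0 : ℝ) 1) (hv : 0 ≤ v) (hw : w ≤ 0) :
    partialQ R q v w + w * partialV R q v w ≤ 0 := by
  have hcurve : Continuous fun t : ℝ => ((q, v + t, w - t) : ℝ × ℝ × ℝ) := by fun_prop
  have hφ : Continuous fun t : ℝ =>
      partialQ R q (v + t) (w - t) + (w - t) * partialV R q (v + t) (w - t) :=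
    ((continuous_partialQ hR).comp hcurve).add
      ((continuous_const.sub continuous_id).mul ((continuous_partialV hR).comp hcurve))
  simpa using isClosed_Iic.mem_of_forall_pos hφ.continuousAt fun t ht =>
    hmono.partialQ_add_mul_partialV_nonpos_of_pos_of_neg (hR.differentiable one_ne_zero _) hq
      (by linarith) (by linarith)

theorem apply_eq_apply_zero (hmono : AntitoneAlongProfiles R)
    (hR : ContDiff ℝ 1 fun p : ℝ × ℝ × ℝ => R p.1 p.2.1 p.2.2)
    (hq : q ∈ Icc (0 : ℝ) 1) (hv : 0 ≤ v) (hw : w ≤ 0) : R q v w = R q v 0 := by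
  have hderiv (x : ℝ) : HasDerivAt (fun x => R q v x) (partialW R q v x) x :=
    hasDerivAt_partialW (hR.differentiable one_ne_zero _)
  refine (constant_of_has_deriv_right_zero (fun x _ => (hderiv x).continuousAt.continuousWithinAt)
    (fun x hx => ?_) 0 ⟨hw, le_rfl⟩).symm
  rw [← hmono.partialW_eq_zero hR hq hv hx.2.le]
  exact (hderiv x).hasDerivWithinAt

theorem partialQ_eq_partialQ_zero (hmono : AntitoneAlongProfiles R)
    (hR : ContDiff ℝ 1 fun p : ℝ × ℝ × ℝ => R p.1 p.2.1 p.2.2)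
    (hq : q ∈ Icc (0 : ℝ) 1) (hv : 0 ≤ v) (hw : w ≤ 0) :
    partialQ R q v w = partialQ R q v 0 :=
  deriv_eq_of_eqOn (fun _ hs => hmono.apply_eq_apply_zero hR hs hv hw) hq
    (uniqueDiffOn_Icc zero_lt_one q hq)
    (hasDerivAt_partialQ (hR.differentiable one_ne_zero _)).differentiableAt
    (hasDerivAt_partialQ (hR.differentiable one_ne_zero _)).differentiableAt

theorem partialV_eq_partialV_zero (hmono : AntitoneAlongProfiles R)
    (hR : ContDiff ℝ 1 fun p : ℝ × ℝ × ℝ => R p.1 p.2.1 p.2.2)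
    (hq : q ∈ Icc (0 : ℝ) 1) (hv : 0 ≤ v) (hw : w ≤ 0) :
    partialV R q v w = partialV R q v 0 :=
  deriv_eq_of_eqOn (fun _ hu => hmono.apply_eq_apply_zero hR hq hu hw) (mem_Ici.mpr hv)
    (uniqueDiffOn_Ici 0 v hv)
    (hasDerivAt_partialV (hR.differentiable one_ne_zero _)).differentiableAt
    (hasDerivAt_partialV (hR.differentiable one_ne_zero _)).differentiableAt

theorem partialQ_nonpos (hmono : AntitoneAlongProfiles R)
    (hR : ContDiff ℝ 1 fun p : ℝ × ℝ × ℝ => R p.1 p.2.1 p.2.2)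
    (hq : q ∈ Icc (0 : ℝ) 1) (hv : 0 ≤ v) (hw : w ≤ 0) : partialQ R q v w ≤ 0 := by
  rw [hmono.partialQ_eq_partialQ_zero hR hq hv hw]
  simpa using hmono.partialQ_add_mul_partialV_nonpos hR hq hv le_rfl

theorem partialV_nonneg (hmono : AntitoneAlongProfiles R)
    (hR : ContDiff ℝ 1 fun p : ℝ × ℝ × ℝ => R p.1 p.2.1 p.2.2)
    (hq : q ∈ Icc (0 : ℝ) 1) (hv : 0 ≤ v) (hw : w ≤ 0) : 0 ≤ partialV R q v w := by
  rw [hmono.partialV_eq_partialV_zero hR hq hv hw]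
  refine nonneg_of_forall_neg_add_mul_nonpos (a := partialQ R q v 0) fun t ht => ?_
  have h := hmono.partialQ_add_mul_partialV_nonpos hR hq hv ht.le
  rwa [hmono.partialQ_eq_partialQ_zero hR hq hv ht.le,
    hmono.partialV_eq_partialV_zero hR hq hv ht.le] at h

end AntitoneAlongProfiles

/-- sign conditions on the partial derivatives of the virtual
value functional `R (q, v̂ q, v̂' q)` of a truthful virtual-efficient mechanism
family. -/
theorem virtual_value_functional_signs (R : ℝ → ℝ → ℝ → ℝ)
    (hR : ContDiff ℝ 1 (fun p : ℝ × ℝ × ℝ => R p.1 p.2.1 p.2.2))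
    (hmono : ∀ vhat : ℝ → ℝ, ContDiff ℝ 2 vhat → Antitone vhat →
      (∀ q, 0 ≤ vhat q) →
      AntitoneOn (fun q => R q (vhat q) (deriv vhat q)) (Set.Icc (0:ℝ) 1)) :
    ∀ vhat : ℝ → ℝ, ContDiff ℝ 2 vhat → Antitone vhat → (∀ q, 0 ≤ vhat q) →
      ∀ q ∈ Set.Icc (0:ℝ) 1,
        deriv (fun w => R q (vhat q) w) (deriv vhat q) = 0
        ∧ deriv (fun s => R s (vhat q) (deriv vhat q)) q ≤ 0
        ∧ 0 ≤ deriv (fun u => R q u (deriv vhat q)) (vhat q) := by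
  intro vhat _ hanti hnonneg q hq
  have hv : 0 ≤ vhat q := hnonneg q
  have hw : deriv vhat q ≤ 0 := hanti.deriv_nonpos
  open AntitoneAlongProfiles in
  exact ⟨partialW_eq_zero hmono hR hq hv hw, partialQ_nonpos hmono hR hq hv hw,
    partialV_nonneg hmono hR hq hv hw⟩
end
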